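/- arXiv:2011.00629 — 4 statements merged into one kernel-verified Lean document; each statement's English description precedes it below -/
import Mathlib

section
/- Let m ≤ n, p ∈ [1,∞), μ a Borel probability measure on ℝᵐ with finite p-th moment and ν a Borel probability measure on ℝⁿ with finite p-th moment. Then the projection p-Wasserstein distance inf_{β ∈ Φ⁻(ν,m)} W_p(μ, β) equals the embedding p-Wasserstein distance inf_{α ∈ Φ⁺_p(μ,n)} W_p(α, ν). -/
open MeasureTheory ENNReal

noncomputable section

/-- The affine map `x ↦ Vx + b` from `ℝⁿ` to `ℝᵐ` (Euclidean spaces). -/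
def phiAff {m n : ℕ} (V : Matrix (Fin m) (Fin n) ℝ)
    (b : EuclideanSpace ℝ (Fin m)) (x : EuclideanSpace ℝ (Fin n)) :
    EuclideanSpace ℝ (Fin m) :=
  (EuclideanSpace.equiv (Fin m) ℝ).symm
    (V.mulVec (EuclideanSpace.equiv (Fin n) ℝ x) + (EuclideanSpace.equiv (Fin m) ℝ) b)

/-- The `p`-Wasserstein distance: infimum over couplings of
`(∫ ‖x − y‖^p dγ)^{1/p}` (Euclidean norm). -/
def wassersteinDist (p : ℝ) {k : ℕ}
    (μ ν : Measure (EuclideanSpace ℝ (Fin k))) : ℝ :=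
  sInf {r : ℝ | ∃ γ : Measure (EuclideanSpace ℝ (Fin k) × EuclideanSpace ℝ (Fin k)),
    γ.map Prod.fst = μ ∧ γ.map Prod.snd = ν ∧
    r = (∫ z, ‖z.1 - z.2‖ ^ p ∂γ) ^ (1 / p)}

/-- The `f`-divergence `D_f(μ‖ν) = ∫ f(dμ/dν) dν`. -/
def fDivergence (f : ℝ → ℝ) {k : ℕ}
    (μ ν : Measure (EuclideanSpace ℝ (Fin k))) : ℝ :=
  ∫ x, f ((μ.rnDeriv ν x).toReal) ∂ν

/-- The Kullback–Leibler divergence `∫ log(dμ/dν) dμ`. -/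
def klDivergence {k : ℕ} (μ ν : Measure (EuclideanSpace ℝ (Fin k))) : ℝ :=
  ∫ x, Real.log ((μ.rnDeriv ν x).toReal) ∂μ

/-- The mixture `(1−θ)μ + θν`. -/
def mixture (θ : ℝ) {k : ℕ} (μ ν : Measure (EuclideanSpace ℝ (Fin k))) :
    Measure (EuclideanSpace ℝ (Fin k)) :=
  ENNReal.ofReal (1 - θ) • μ + ENNReal.ofReal θ • ν

/-- The θ-weighted Jensen–Shannon divergence. -/
def jsDivergence (θ : ℝ) {k : ℕ} (μ ν : Measure (EuclideanSpace ℝ (Fin k))) : ℝ :=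
  (1 / 2) * klDivergence μ (mixture θ μ ν) + (1 / 2) * klDivergence ν (mixture θ ν μ)

/-- The total variation metric `sup_A |μ(A) − ν(A)|`. -/
def tvDist {k : ℕ} (μ ν : Measure (EuclideanSpace ℝ (Fin k))) : ℝ :=
  sSup {r : ℝ | ∃ A : Set (EuclideanSpace ℝ (Fin k)), MeasurableSet A ∧
    r = |(μ A).toReal - (ν A).toReal|}

/-- The Hellinger squared divergence `∫ (√(dμ/dν) − 1)² dν`. -/
def hellingerSq {k : ℕ} (μ ν : Measure (EuclideanSpace ℝ (Fin k))) : ℝ :=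
  ∫ x, (Real.sqrt ((μ.rnDeriv ν x).toReal) - 1) ^ 2 ∂ν

/-- `ν` has a strictly positive density w.r.t. Lebesgue measure. -/
def HasPosDensity {k : ℕ} (ν : Measure (EuclideanSpace ℝ (Fin k))) : Prop :=
  ∃ t : EuclideanSpace ℝ (Fin k) → ℝ, Measurable t ∧ (∀ x, 0 < t x) ∧
    ν = volume.withDensity fun x => ENNReal.ofReal (t x)

end

/-! Pushing a coupling of `α` and `ν` forward by the `1`-Lipschitz map `φ = phiAff V b` gives a
coupling of `φ₊α = μ` and `φ₊ν` of no larger cost, so projecting never loses against embedding.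
Conversely, glue a coupling `γ` of `μ` and `φ₊ν` to the coupling `(φ X, X)` of `φ₊ν` and `ν`
(by disintegration), obtaining `(Y, X)` with `(Y, φ X) ∼ γ` and `X ∼ ν`. Then
`X' = X + Vᵀ (Y - φ X)` satisfies `φ X' = Y` because `V Vᵀ = 1`, and `‖X' - X‖ = ‖Y - φ X‖`
because `Vᵀ` is an isometry, so the law of `X'` embeds `μ` at cost at most that of `γ`. -/

open ProbabilityTheory
open scoped Matrix

namespace Matrix

variable {m n : ℕ} {V : Matrix (Fin m) (Fin n) ℝ}

theorem toEuclideanLin_transpose_eq_adjoint (V : Matrix (Fin m) (Fin n) ℝ) :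
    toEuclideanLin Vᵀ = LinearMap.adjoint (toEuclideanLin V) :=
  toEuclideanLin_conjTranspose_eq_adjoint V

theorem toEuclideanLin_apply_toEuclideanLin_transpose (hV : V * Vᵀ = 1)
    (w : EuclideanSpace ℝ (Fin m)) : toEuclideanLin V (toEuclideanLin Vᵀ w) = w := by
  simp [toLpLin_apply, mulVec_mulVec, hV]

theorem norm_toEuclideanLin_transpose_apply (hV : V * Vᵀ = 1) (w : EuclideanSpace ℝ (Fin m)) :
    ‖toEuclideanLin Vᵀ w‖ = ‖w‖ := by
  refine (LinearMap.norm_map_iff_inner_map_map _).2 (fun x y => ?_) w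
  rw [toEuclideanLin_transpose_eq_adjoint, LinearMap.adjoint_inner_left,
    ← toEuclideanLin_transpose_eq_adjoint, toEuclideanLin_apply_toEuclideanLin_transpose hV]

theorem norm_toEuclideanLin_apply_le (hV : V * Vᵀ = 1) (v : EuclideanSpace ℝ (Fin n)) :
    ‖toEuclideanLin V v‖ ≤ ‖v‖ := by
  have h : ‖toEuclideanLin V v‖ ^ 2 ≤ ‖v‖ * ‖toEuclideanLin V v‖ :=
    calc ‖toEuclideanLin V v‖ ^ 2
        = inner ℝ v (toEuclideanLin Vᵀ (toEuclideanLin V v)) := by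
          rw [← real_inner_self_eq_norm_sq, toEuclideanLin_transpose_eq_adjoint,
            LinearMap.adjoint_inner_right]
      _ ≤ ‖v‖ * ‖toEuclideanLin V v‖ := by
          rw [← norm_toEuclideanLin_transpose_apply hV (toEuclideanLin V v)]
          exact real_inner_le_norm _ _
  nlinarith [norm_nonneg v, norm_nonneg (toEuclideanLin V v)]

theorem exists_mul_transpose_eq_one (hmn : m ≤ n) :
    ∃ V : Matrix (Fin m) (Fin n) ℝ, V * Vᵀ = 1 :=
  ⟨(1 : Matrix (Fin n) (Fin n) ℝ).submatrix (Fin.castLE hmn) id, by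
    rw [transpose_submatrix, transpose_one, ← submatrix_mul _ _ _ _ _ Function.bijective_id,
      one_mul, submatrix_one _ (Fin.castLE_injective hmn)]⟩

end Matrix

namespace MeasureTheory.Measure

variable {A B C : Type*} [MeasurableSpace A] [MeasurableSpace B] [MeasurableSpace C]

theorem prodMkLeft_comp (κ : Kernel B C) (γ : Measure (A × B)) :
    κ.prodMkLeft A ∘ₘ γ = κ ∘ₘ γ.map Prod.snd := by
  rw [Kernel.prodMkLeft, ← Kernel.comp_deterministic_eq_comap, ← comp_assoc,
    deterministic_comp_eq_map]

theorem exists_map_prodMap_eq_of_map_snd_eq [MeasurableEq B] [StandardBorelSpace C] [Nonempty C]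
    {γ : Measure (A × B)} [SFinite γ] {ν : Measure C} [IsFiniteMeasure ν] {f : C → B}
    (hf : Measurable f) (hγ : γ.map Prod.snd = ν.map f) :
    ∃ Γ : Measure (A × C), Γ.map Prod.snd = ν ∧ Γ.map (Prod.map id f) = γ := by
  have hgraph : Measurable fun x => (f x, x) := hf.prodMk measurable_id
  set η := ν.map fun x => (f x, x)
  have hη_fst : η.fst = ν.map f := by
    rw [Measure.fst, map_map measurable_fst hgraph]; rfl
  have hη_snd : η.snd = ν := by
    rw [Measure.snd, map_map measurable_snd hgraph]; exact map_id
  have hη_graph : ∀ᵐ q ∂(η.fst ⊗ₘ η.condKernel), f q.2 = q.1 := by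
    rw [η.disintegrate η.condKernel]
    exact (ae_map_iff hgraph.aemeasurable
      (measurableSet_eq_fun (hf.comp measurable_snd) measurable_fst)).2 (ae_of_all _ fun _ => rfl)
  have hκ : ∀ᵐ a ∂γ, ∀ᵐ c ∂η.condKernel a.2, f c = a.2 := by
    refine ae_of_ae_map (p := fun b => ∀ᵐ c ∂η.condKernel b, f c = b)
      measurable_snd.aemeasurable ?_
    rw [hγ, ← hη_fst]
    exact ae_ae_of_ae_compProd hη_graph
  set Γ := γ ⊗ₘ η.condKernel.prodMkLeft A
  have hΓ : ∀ᵐ q ∂Γ, f q.2 = q.1.2 :=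
    ae_compProd_of_ae_ae
      (measurableSet_eq_fun (hf.comp measurable_snd) measurable_fst.snd) hκ
  have hmeas : Measurable fun q : (A × B) × C => (q.1.1, q.2) :=
    measurable_fst.fst.prodMk measurable_snd
  refine ⟨Γ.map fun q => (q.1.1, q.2), ?_, ?_⟩
  · rw [map_map measurable_snd hmeas]
    change Γ.snd = ν
    rw [snd_compProd, prodMkLeft_comp, hγ, ← hη_fst, ← snd_compProd, η.disintegrate, hη_snd]
  · rw [map_map (measurable_id.prodMap hf) hmeas, map_congr (g := Prod.fst) ?_]
    · exact fst_compProd _ _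
    · filter_upwards [hΓ] with q hq
      simp [hq]

end MeasureTheory.Measure

section phiAff

variable {m n : ℕ} {V : Matrix (Fin m) (Fin n) ℝ}

theorem phiAff_apply (V : Matrix (Fin m) (Fin n) ℝ) (b : EuclideanSpace ℝ (Fin m))
    (x : EuclideanSpace ℝ (Fin n)) : phiAff V b x = Matrix.toEuclideanLin V x + b :=
  rfl

theorem continuous_phiAff (V : Matrix (Fin m) (Fin n) ℝ) (b : EuclideanSpace ℝ (Fin m)) :
    Continuous (phiAff V b) := by
  simp_rw [funext (phiAff_apply V b)]
  exact (Matrix.toEuclideanLin V).continuous_of_finiteDimensional.add continuous_const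

theorem measurable_phiAff (V : Matrix (Fin m) (Fin n) ℝ) (b : EuclideanSpace ℝ (Fin m)) :
    Measurable (phiAff V b) :=
  (continuous_phiAff V b).measurable

theorem lipschitzWith_one_phiAff (hV : V * Vᵀ = 1) (b : EuclideanSpace ℝ (Fin m)) :
    LipschitzWith 1 (phiAff V b) :=
  LipschitzWith.of_dist_le_mul fun x y => by
    simpa [dist_eq_norm, phiAff_apply, ← map_sub] using
      Matrix.norm_toEuclideanLin_apply_le hV (x - y)

theorem phiAff_add_toEuclideanLin_transpose (hV : V * Vᵀ = 1) (b : EuclideanSpace ℝ (Fin m))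
    (x : EuclideanSpace ℝ (Fin n)) (y : EuclideanSpace ℝ (Fin m)) :
    phiAff V b (x + Matrix.toEuclideanLin Vᵀ (y - phiAff V b x)) = y := by
  rw [phiAff_apply, map_add, Matrix.toEuclideanLin_apply_toEuclideanLin_transpose hV,
    add_right_comm, ← phiAff_apply, add_sub_cancel]

end phiAff

section Moments

variable {X E : Type*} [MeasurableSpace X] [NormedAddCommGroup E] [MeasurableSpace E]
  [BorelSpace E] [SecondCountableTopology E] {p : ℝ}

theorem integrable_norm_rpow_map_iff (hp : 0 < p) {γ : Measure X} {f : X → E}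
    (hf : Measurable f) :
    Integrable (fun x => ‖x‖ ^ p) (γ.map f) ↔ MemLp f (ENNReal.ofReal p) γ := by
  rw [integrable_map_measure (by fun_prop (disch := exact hp.le)) hf.aemeasurable,
    ← integrable_norm_rpow_iff hf.aestronglyMeasurable (by simpa using hp) ofReal_ne_top,
    toReal_ofReal hp.le]
  rfl

end Moments

section Wasserstein

variable {k : ℕ} {p : ℝ} {μ ν : Measure (EuclideanSpace ℝ (Fin k))}

theorem wassersteinDist_nonneg : 0 ≤ wassersteinDist p μ ν :=
  Real.sInf_nonneg fun _ ⟨_, _, _, hr⟩ => hr ▸ by positivity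

theorem wassersteinDist_le {γ : Measure (EuclideanSpace ℝ (Fin k) × EuclideanSpace ℝ (Fin k))}
    (hγ₁ : γ.map Prod.fst = μ) (hγ₂ : γ.map Prod.snd = ν) :
    wassersteinDist p μ ν ≤ (∫ z, ‖z.1 - z.2‖ ^ p ∂γ) ^ (1 / p) :=
  csInf_le ⟨0, fun _ ⟨_, _, _, hr⟩ => hr ▸ by positivity⟩ ⟨γ, hγ₁, hγ₂, rfl⟩

theorem le_wassersteinDist [IsProbabilityMeasure μ] [IsProbabilityMeasure ν] {c : ℝ}
    (h : ∀ γ : Measure (EuclideanSpace ℝ (Fin k) × EuclideanSpace ℝ (Fin k)),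
      γ.map Prod.fst = μ → γ.map Prod.snd = ν → c ≤ (∫ z, ‖z.1 - z.2‖ ^ p ∂γ) ^ (1 / p)) :
    c ≤ wassersteinDist p μ ν :=
  le_csInf ⟨_, μ.prod ν, Measure.fst_prod, Measure.snd_prod, rfl⟩ fun _ ⟨γ, hγ₁, hγ₂, hr⟩ =>
    hr ▸ h γ hγ₁ hγ₂

end Wasserstein

theorem wassersteinDist_map_le_of_lipschitzWith {k l : ℕ} {p : ℝ} (hp : 0 < p)
    {f : EuclideanSpace ℝ (Fin k) → EuclideanSpace ℝ (Fin l)} (hf : LipschitzWith 1 f)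
    {α ν : Measure (EuclideanSpace ℝ (Fin k))} [IsProbabilityMeasure α] [IsProbabilityMeasure ν]
    (hα : Integrable (fun x => ‖x‖ ^ p) α) (hν : Integrable (fun x => ‖x‖ ^ p) ν) :
    wassersteinDist p (α.map f) (ν.map f) ≤ wassersteinDist p α ν := by
  refine le_wassersteinDist fun γ hγ₁ hγ₂ => ?_
  have hfm : Measurable f := hf.continuous.measurable
  have hff : Measurable (Prod.map f f) := hfm.prodMap hfm
  have hcost : Integrable (fun z => ‖z.1 - z.2‖ ^ p) γ := by
    have h₁ := (integrable_norm_rpow_map_iff hp measurable_fst).1 (hγ₁ ▸ hα)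
    have h₂ := (integrable_norm_rpow_map_iff hp measurable_snd).1 (hγ₂ ▸ hν)
    simpa [toReal_ofReal hp.le] using
      (h₁.sub h₂).integrable_norm_rpow (by simpa using hp) ofReal_ne_top
  have hfγ₁ : (γ.map (Prod.map f f)).map Prod.fst = α.map f := by
    rw [Measure.map_map measurable_fst hff, ← hγ₁, Measure.map_map hfm measurable_fst]; rfl
  have hfγ₂ : (γ.map (Prod.map f f)).map Prod.snd = ν.map f := by
    rw [Measure.map_map measurable_snd hff, ← hγ₂, Measure.map_map hfm measurable_snd]; rfl
  calc wassersteinDist p (α.map f) (ν.map f)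
      ≤ (∫ z, ‖z.1 - z.2‖ ^ p ∂γ.map (Prod.map f f)) ^ (1 / p) := wassersteinDist_le hfγ₁ hfγ₂
    _ = (∫ z, ‖f z.1 - f z.2‖ ^ p ∂γ) ^ (1 / p) := by
        rw [integral_map hff.aemeasurable (by fun_prop (disch := exact hp.le))]
        rfl
    _ ≤ (∫ z, ‖z.1 - z.2‖ ^ p ∂γ) ^ (1 / p) := by
        gcongr ?_ ^ _
        refine integral_mono_of_nonneg (ae_of_all _ fun _ => by positivity) hcost
          (ae_of_all _ fun z => Real.rpow_le_rpow (norm_nonneg _) ?_ hp.le)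
        simpa using hf.norm_sub_le z.1 z.2

theorem exists_map_phiAff_eq_wassersteinDist_le {m n : ℕ} {p : ℝ} (hp : 0 < p)
    {V : Matrix (Fin m) (Fin n) ℝ} (hV : V * Vᵀ = 1) (b : EuclideanSpace ℝ (Fin m))
    {μ : Measure (EuclideanSpace ℝ (Fin m))} {ν : Measure (EuclideanSpace ℝ (Fin n))}
    [IsProbabilityMeasure ν] (hμ : Integrable (fun x => ‖x‖ ^ p) μ)
    (hν : Integrable (fun x => ‖x‖ ^ p) ν)
    {γ : Measure (EuclideanSpace ℝ (Fin m) × EuclideanSpace ℝ (Fin m))}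
    (hγ₁ : γ.map Prod.fst = μ) (hγ₂ : γ.map Prod.snd = ν.map (phiAff V b)) :
    ∃ α : Measure (EuclideanSpace ℝ (Fin n)), IsProbabilityMeasure α ∧
      Integrable (fun x => ‖x‖ ^ p) α ∧ α.map (phiAff V b) = μ ∧
      wassersteinDist p α ν ≤ (∫ z, ‖z.1 - z.2‖ ^ p ∂γ) ^ (1 / p) := by
  have hφ := measurable_phiAff V b
  have : IsProbabilityMeasure (γ.map Prod.snd) :=
    hγ₂ ▸ Measure.isProbabilityMeasure_map hφ.aemeasurable
  have : IsProbabilityMeasure γ := Measure.isProbabilityMeasure_of_map Prod.snd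
  obtain ⟨Γ, hΓ₂, hΓ⟩ := γ.exists_map_prodMap_eq_of_map_snd_eq hφ hγ₂
  have : IsProbabilityMeasure (Γ.map Prod.snd) := hΓ₂ ▸ ‹IsProbabilityMeasure ν›
  have : IsProbabilityMeasure Γ := Measure.isProbabilityMeasure_of_map Prod.snd
  have hΓ₁ : Γ.map Prod.fst = μ := by
    rw [← hγ₁, ← hΓ, Measure.map_map measurable_fst (measurable_id.prodMap hφ)]
    rfl
  set u : EuclideanSpace ℝ (Fin m) × EuclideanSpace ℝ (Fin n) → EuclideanSpace ℝ (Fin n) :=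
    fun q => q.2 + Matrix.toEuclideanLin Vᵀ (q.1 - phiAff V b q.2)
  have hu : Measurable u := by fun_prop
  refine ⟨Γ.map u, Measure.isProbabilityMeasure_map hu.aemeasurable, ?_, ?_, ?_⟩
  · have h₁ := (integrable_norm_rpow_map_iff hp measurable_fst).1 (hΓ₁ ▸ hμ)
    have h₂ := (integrable_norm_rpow_map_iff hp measurable_snd).1 (hΓ₂ ▸ hν)
    have hφ₂ : MemLp (fun q => phiAff V b q.2) (ENNReal.ofReal p) Γ := by
      simp_rw [phiAff_apply]
      exact (h₂.continuousLinearMap_comp (Matrix.toEuclideanLin V).toContinuousLinearMap).add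
        (memLp_const b)
    exact (integrable_norm_rpow_map_iff hp hu).2 (h₂.add
      ((h₁.sub hφ₂).continuousLinearMap_comp (Matrix.toEuclideanLin Vᵀ).toContinuousLinearMap))
  · rw [Measure.map_map hφ hu, ← hΓ₁]
    congr 1
    exact funext fun q => phiAff_add_toEuclideanLin_transpose hV b q.2 q.1
  · have hu₂ : Measurable fun q => (u q, q.2) := hu.prodMk measurable_snd
    calc wassersteinDist p (Γ.map u) ν
        ≤ (∫ z, ‖z.1 - z.2‖ ^ p ∂Γ.map fun q => (u q, q.2)) ^ (1 / p) :=
          wassersteinDist_le (by rw [Measure.map_map measurable_fst hu₂]; rfl)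
            (by rw [Measure.map_map measurable_snd hu₂]; exact hΓ₂)
      _ = (∫ z, ‖z.1 - z.2‖ ^ p ∂γ) ^ (1 / p) := by
          rw [← hΓ, integral_map hu₂.aemeasurable (by fun_prop (disch := exact hp.le)),
            integral_map (measurable_id.prodMap hφ).aemeasurable
              (by fun_prop (disch := exact hp.le))]
          simp only [u, add_sub_cancel_left, Matrix.norm_toEuclideanLin_transpose_apply hV]
          rfl

theorem projection_eq_embedding_wasserstein {m n : ℕ} (hmn : m ≤ n) (p : ℝ) (hp : 1 ≤ p)
    (μ : Measure (EuclideanSpace ℝ (Fin m))) (ν : Measure (EuclideanSpace ℝ (Fin n)))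
    [IsProbabilityMeasure μ] [IsProbabilityMeasure ν]
    (hμ : Integrable (fun x => ‖x‖ ^ p) μ) (hν : Integrable (fun x => ‖x‖ ^ p) ν) :
    sInf {r : ℝ | ∃ (V : Matrix (Fin m) (Fin n) ℝ) (b : EuclideanSpace ℝ (Fin m)),
        V * V.transpose = 1 ∧ r = wassersteinDist p μ (ν.map (phiAff V b))} =
    sInf {r : ℝ | ∃ α : Measure (EuclideanSpace ℝ (Fin n)), IsProbabilityMeasure α ∧
        Integrable (fun x => ‖x‖ ^ p) α ∧
        (∃ (V : Matrix (Fin m) (Fin n) ℝ) (b : EuclideanSpace ℝ (Fin m)),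
          V * V.transpose = 1 ∧ α.map (phiAff V b) = μ) ∧
        r = wassersteinDist p α ν} := by
  have hp₀ : 0 < p := by linarith
  have (V : Matrix (Fin m) (Fin n) ℝ) (b) : IsProbabilityMeasure (ν.map (phiAff V b)) :=
    Measure.isProbabilityMeasure_map (measurable_phiAff V b).aemeasurable
  obtain ⟨V₀, hV₀⟩ := Matrix.exists_mul_transpose_eq_one hmn
  obtain ⟨α₀, hα₀, hα₀p, hα₀μ, -⟩ := exists_map_phiAff_eq_wassersteinDist_le hp₀ hV₀ 0 hμ hν
    Measure.fst_prod (Measure.snd_prod (μ := μ))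
  refine le_antisymm (le_csInf ⟨_, α₀, hα₀, hα₀p, ⟨V₀, 0, hV₀, hα₀μ⟩, rfl⟩ ?_)
    (le_csInf ⟨_, V₀, 0, hV₀, rfl⟩ ?_)
  · rintro _ ⟨α, hα, hαp, ⟨V, b, hV, hαμ⟩, rfl⟩
    refine csInf_le_of_le ⟨0, ?_⟩ ⟨V, b, hV, rfl⟩ ?_
    · rintro _ ⟨_, _, _, rfl⟩
      exact wassersteinDist_nonneg
    · exact hαμ ▸
        wassersteinDist_map_le_of_lipschitzWith hp₀ (lipschitzWith_one_phiAff hV b) hαp hν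
  · rintro _ ⟨V, b, hV, rfl⟩
    refine le_wassersteinDist fun γ hγ₁ hγ₂ => ?_
    obtain ⟨α, hα, hαp, hαμ, hle⟩ :=
      exists_map_phiAff_eq_wassersteinDist_le hp₀ hV b hμ hν hγ₁ hγ₂
    refine csInf_le_of_le ⟨0, ?_⟩ ⟨α, hα, hαp, ⟨V, b, hV, hαμ⟩, rfl⟩ hle
    rintro _ ⟨_, _, _, _, rfl⟩
    exact wassersteinDist_nonneg
end

section
/- Let ρ₁ = N(μ₁, σ²) be a one-dimensional Gaussian and ρ₂ = N(μ₂, Σ) an n-dimensional Gaussian with Σ positive definite having largest eigenvalue λ₁ and smallest eigenvalue λ_n. Then the augmented KL-divergence D̂_KL(ρ₁‖ρ₂) = inf_{‖x‖=1, b∈ℝ} D_KL(ρ₁ ‖ N(xᵀμ₂+b, xᵀΣx)) equals (1/2)[σ²/λ_n − 1 + log(λ_n/σ²)] if σ² < λ_n; 0 if λ_n ≤ σ² ≤ λ₁; and (1/2)[σ²/λ₁ − 1 + log(λ₁/σ²)] if σ² > λ₁. -/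
open MeasureTheory ENNReal Matrix

/-! Choosing `b = μ₁ - xᵀμ₂` removes the mean term, leaving the divergence
`½ (σ²/t - 1 + log (t/σ²))` between Gaussians of equal means and variances `σ²`, `t = xᵀΣx`.
The values of `xᵀΣx` on the unit sphere fill `[λₙ, λ₁]`, and the divergence decreases in `t`
on `(0, σ²]` and increases on `[σ², ∞)`, so the infimum is attained at the projection of `σ²`
onto `[λₙ, λ₁]`. -/

theorem ordConnected_image_compl_zero {E : Type*} [AddCommGroup E] [Module ℝ E]
    [TopologicalSpace E] [ContinuousAdd E] [ContinuousSMul ℝ E] {f : E → ℝ}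
    (hf : ContinuousOn f {0}ᶜ) (hsmul : ∀ (c : ℝ) (x : E), c ≠ 0 → f (c • x) = f x) :
    (f '' {0}ᶜ).OrdConnected := by
  refine ⟨?_⟩
  rintro _ ⟨u, hu, rfl⟩ _ ⟨v, hv, rfl⟩
  -- A segment through `0` joins two points of one line, on which `f` is constant.
  by_cases h0 : (0 : E) ∈ segment ℝ u v
  · obtain ⟨r₁, r₂, hr₁, hr₂, hr⟩ := (mem_segment_iff_sameRay.mp h0).exists_pos
      (by simpa using hu) (by simpa using hv)
    have hvu : v = (-(r₁ / r₂)) • u := by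
      rw [zero_sub, sub_zero] at hr
      rw [neg_smul, ← smul_neg, div_eq_inv_mul, mul_smul, hr, inv_smul_smul₀ hr₂.ne']
    rw [hvu, hsmul _ _ (by simp [hr₁.ne', hr₂.ne']), Set.Icc_self, Set.singleton_subset_iff]
    exact Set.mem_image_of_mem f hu
  · have hseg : segment ℝ u v ⊆ {0}ᶜ := fun w hw hw0 =>
      h0 (by rwa [← Set.mem_singleton_iff.mp hw0])
    exact ((convex_segment u v).isPreconnected.image f (hf.mono hseg)).Icc_subset
      (Set.mem_image_of_mem f (left_mem_segment ℝ u v))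
      (Set.mem_image_of_mem f (right_mem_segment ℝ u v)) |>.trans (Set.image_mono hseg)

theorem ordConnected_setOf_unit_dotProduct_mulVec {n : ℕ} (S : Matrix (Fin n) (Fin n) ℝ) :
    {l : ℝ | ∃ x : Fin n → ℝ, (∑ i, x i ^ 2) = 1 ∧ l = x ⬝ᵥ S.mulVec x}.OrdConnected := by
  set R : (Fin n → ℝ) → ℝ := fun x => (x ⬝ᵥ S.mulVec x) / (x ⬝ᵥ x)
  have hsum (x : Fin n → ℝ) : ∑ i, x i ^ 2 = x ⬝ᵥ x := by simp [dotProduct, sq]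
  have hpos {x : Fin n → ℝ} (hx : x ≠ 0) : 0 < x ⬝ᵥ x := by
    simpa using dotProduct_star_self_pos_iff.mpr hx
  have hR : {l : ℝ | ∃ x : Fin n → ℝ, (∑ i, x i ^ 2) = 1 ∧ l = x ⬝ᵥ S.mulVec x} = R '' {0}ᶜ := by
    ext l
    constructor
    · rintro ⟨x, hx, rfl⟩
      rw [hsum] at hx
      exact ⟨x, fun h0 => by simp [Set.mem_singleton_iff.mp h0] at hx, by simp [R, hx]⟩
    · rintro ⟨x, hx, rfl⟩
      have hxx := hpos hx
      have hinv : (√(x ⬝ᵥ x))⁻¹ * (√(x ⬝ᵥ x))⁻¹ = (x ⬝ᵥ x)⁻¹ := by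
        rw [← mul_inv, Real.mul_self_sqrt hxx.le]
      refine ⟨(√(x ⬝ᵥ x))⁻¹ • x, ?_, ?_⟩
      · rw [hsum, smul_dotProduct, dotProduct_smul, smul_smul, smul_eq_mul, hinv,
          inv_mul_cancel₀ hxx.ne']
      · rw [mulVec_smul, smul_dotProduct, dotProduct_smul, smul_smul, smul_eq_mul, hinv,
          inv_mul_eq_div]
  rw [hR]
  refine ordConnected_image_compl_zero ?_ ?_
  · exact (by fun_prop : Continuous fun x => x ⬝ᵥ S.mulVec x).continuousOn.div
      (by fun_prop : Continuous fun x : Fin n → ℝ => x ⬝ᵥ x).continuousOn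
      fun x hx => (hpos hx).ne'
  · intro c x hc
    simp only [R, mulVec_smul, smul_dotProduct, dotProduct_smul, smul_eq_mul]
    field_simp

/-- `KL(N(a, s) ‖ N(c, t))`, with the variances `s`, `t` (not standard deviations). -/
noncomputable def gaussianKL (a s c t : ℝ) : ℝ :=
  (1 / 2) * (s / t + (a - c) ^ 2 / t - 1 + Real.log (t / s))

theorem gaussianKL_same_mean (a s t : ℝ) :
    gaussianKL a s a t = (1 / 2) * (s / t - 1 + Real.log (t / s)) := by
  simp [gaussianKL]

theorem gaussianKL_same_mean_le (a c s : ℝ) {t : ℝ} (ht : 0 ≤ t) :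
    gaussianKL a s a t ≤ gaussianKL a s c t := by
  have : 0 ≤ (a - c) ^ 2 / t := by positivity
  rw [gaussianKL_same_mean, gaussianKL]
  linarith

theorem gaussianKL_self (a : ℝ) {s : ℝ} (hs : s ≠ 0) : gaussianKL a s a s = 0 := by
  simp [gaussianKL_same_mean, hs]

theorem div_le_gaussianKL_sub (a : ℝ) {s u t : ℝ} (hs : s ≠ 0) (hu : 0 < u) (ht : 0 < t) :
    (t - u) * (u - s) / (2 * u * t) ≤ gaussianKL a s a t - gaussianKL a s a u := by
  have hlog : Real.log (t / s) - Real.log (u / s) = Real.log (t / u) := by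
    rw [Real.log_div ht.ne' hs, Real.log_div hu.ne' hs, Real.log_div ht.ne' hu.ne']
    ring
  have hlog_ge : 1 - u / t ≤ Real.log (t / u) := by
    simpa using Real.one_sub_inv_le_log_of_pos (div_pos ht hu)
  have halg : (t - u) * (u - s) / (2 * u * t) = (1 / 2) * (s / t - s / u + (1 - u / t)) := by
    field_simp
    ring
  rw [gaussianKL_same_mean, gaussianKL_same_mean, halg]
  linarith

theorem monotoneOn_gaussianKL (a : ℝ) {s : ℝ} (hs : 0 < s) :
    MonotoneOn (gaussianKL a s a) (Set.Ici s) := by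
  intro u (hsu : s ≤ u) t _ hut
  have hu := hs.trans_le hsu
  have ht := hu.trans_le hut
  have hbound := div_le_gaussianKL_sub a hs.ne' hu ht
  have : 0 ≤ (t - u) * (u - s) / (2 * u * t) :=
    div_nonneg (mul_nonneg (sub_nonneg.mpr hut) (sub_nonneg.mpr hsu)) (by positivity)
  linarith

theorem antitoneOn_gaussianKL (a : ℝ) {s : ℝ} (hs : 0 < s) :
    AntitoneOn (gaussianKL a s a) (Set.Ioc 0 s) := by
  intro u ⟨hu, _⟩ t ⟨ht, hts⟩ hut
  have hbound := div_le_gaussianKL_sub a hs.ne' ht hu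
  have : 0 ≤ (u - t) * (t - s) / (2 * t * u) :=
    div_nonneg (mul_nonneg_of_nonpos_of_nonpos (sub_nonpos.mpr hut) (sub_nonpos.mpr hts))
      (by positivity)
  linarith

theorem gaussianKL_clamp_le (a : ℝ) {s lo hi t : ℝ} (hs : 0 < s) (hlo : 0 < lo)
    (ht : t ∈ Set.Icc lo hi) : gaussianKL a s a (max lo (min s hi)) ≤ gaussianKL a s a t := by
  obtain ⟨hlot, hthi⟩ := ht
  rcases le_total s t with hst | hts
  · have hc : max lo (min s hi) = max lo s := by rw [min_eq_left (hst.trans hthi)]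
    rw [hc]
    exact monotoneOn_gaussianKL a hs (le_max_right lo s) hst (max_le hlot hst)
  · exact antitoneOn_gaussianKL a hs ⟨hlo.trans_le hlot, hts⟩
      ⟨hlo.trans_le (le_max_left _ _), max_le (hlot.trans hts) (min_le_left _ _)⟩
      (le_max_of_le_right (le_min hts hthi))

theorem gaussianKL_clamp_eq (a : ℝ) {s lo hi : ℝ} (hs : s ≠ 0) (hlohi : lo ≤ hi) :
    gaussianKL a s a (max lo (min s hi)) =
      if s < lo then (1 / 2) * (s / lo - 1 + Real.log (lo / s))
      else if s ≤ hi then 0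
      else (1 / 2) * (s / hi - 1 + Real.log (hi / s)) := by
  split_ifs with hslo hshi
  · rw [max_eq_left ((min_le_left _ _).trans hslo.le), gaussianKL_same_mean]
  · rw [min_eq_left hshi, max_eq_right (not_lt.mp hslo), gaussianKL_self a hs]
  · rw [min_eq_right (not_le.mp hshi).le, max_eq_right hlohi, gaussianKL_same_mean]

theorem augmented_kl_gaussian_general {n : ℕ} (μ₁ σ : ℝ) (hσ : 0 < σ)
    (μ₂ : Fin n → ℝ) (S : Matrix (Fin n) (Fin n) ℝ) (hS : S.PosDef)
    (lam1 lamn : ℝ)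
    (hmax : IsGreatest {l : ℝ | ∃ x : Fin n → ℝ, (∑ i, x i ^ 2) = 1 ∧
      l = x ⬝ᵥ S.mulVec x} lam1)
    (hmin : IsLeast {l : ℝ | ∃ x : Fin n → ℝ, (∑ i, x i ^ 2) = 1 ∧
      l = x ⬝ᵥ S.mulVec x} lamn) :
    sInf {r : ℝ | ∃ (x : Fin n → ℝ) (b : ℝ), (∑ i, x i ^ 2) = 1 ∧
      r = (1 / 2) * (σ ^ 2 / (x ⬝ᵥ S.mulVec x)
        + (μ₁ - (x ⬝ᵥ μ₂ + b)) ^ 2 / (x ⬝ᵥ S.mulVec x) - 1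
        + Real.log ((x ⬝ᵥ S.mulVec x) / σ ^ 2))} =
    if σ ^ 2 < lamn then (1 / 2) * (σ ^ 2 / lamn - 1 + Real.log (lamn / σ ^ 2))
    else if σ ^ 2 ≤ lam1 then 0
    else (1 / 2) * (σ ^ 2 / lam1 - 1 + Real.log (lam1 / σ ^ 2)) := by
  have hσ2 : 0 < σ ^ 2 := by positivity
  have hpos {x : Fin n → ℝ} (hx : ∑ i, x i ^ 2 = 1) : 0 < x ⬝ᵥ S.mulVec x :=
    hS.dotProduct_mulVec_pos fun h0 => by simp [h0] at hx
  have hlamn : 0 < lamn := by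
    obtain ⟨x, hx, rfl⟩ := hmin.1
    exact hpos hx
  have hlohi : lamn ≤ lam1 := hmin.2 hmax.1
  obtain ⟨x₀, hx₀, hc⟩ : max lamn (min (σ ^ 2) lam1) ∈
      {l : ℝ | ∃ x : Fin n → ℝ, (∑ i, x i ^ 2) = 1 ∧ l = x ⬝ᵥ S.mulVec x} :=
    (ordConnected_setOf_unit_dotProduct_mulVec S).out hmin.1 hmax.1
      ⟨le_max_left _ _, max_le hlohi (min_le_right _ _)⟩
  have hleast : IsLeast {r : ℝ | ∃ (x : Fin n → ℝ) (b : ℝ), (∑ i, x i ^ 2) = 1 ∧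
      r = gaussianKL μ₁ (σ ^ 2) (x ⬝ᵥ μ₂ + b) (x ⬝ᵥ S.mulVec x)}
      (gaussianKL μ₁ (σ ^ 2) μ₁ (max lamn (min (σ ^ 2) lam1))) := by
    refine ⟨⟨x₀, μ₁ - x₀ ⬝ᵥ μ₂, hx₀, by rw [hc, add_sub_cancel]⟩, ?_⟩
    rintro r ⟨x, b, hx, rfl⟩
    exact (gaussianKL_clamp_le μ₁ hσ2 hlamn ⟨hmin.2 ⟨x, hx, rfl⟩, hmax.2 ⟨x, hx, rfl⟩⟩).trans
      (gaussianKL_same_mean_le _ _ _ (hpos hx).le)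
  exact hleast.csInf_eq.trans (gaussianKL_clamp_eq μ₁ hσ2.ne' hlohi)

theorem augmented_kl_gaussian {n : ℕ} (hn : 0 < n) (μ₁ σ : ℝ) (hσ : 0 < σ)
    (μ₂ : Fin n → ℝ) (S : Matrix (Fin n) (Fin n) ℝ) (hS : S.PosDef)
    (lam1 lamn : ℝ)
    (hmax : IsGreatest {l : ℝ | ∃ x : Fin n → ℝ, (∑ i, x i ^ 2) = 1 ∧
      l = x ⬝ᵥ S.mulVec x} lam1)
    (hmin : IsLeast {l : ℝ | ∃ x : Fin n → ℝ, (∑ i, x i ^ 2) = 1 ∧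
      l = x ⬝ᵥ S.mulVec x} lamn) :
    sInf {r : ℝ | ∃ (x : Fin n → ℝ) (b : ℝ), (∑ i, x i ^ 2) = 1 ∧
      r = (1 / 2) * (σ ^ 2 / (x ⬝ᵥ S.mulVec x)
        + (μ₁ - (x ⬝ᵥ μ₂ + b)) ^ 2 / (x ⬝ᵥ S.mulVec x) - 1
        + Real.log ((x ⬝ᵥ S.mulVec x) / σ ^ 2))} =
    if σ ^ 2 < lamn then (1 / 2) * (σ ^ 2 / lamn - 1 + Real.log (lamn / σ ^ 2))
    else if σ ^ 2 ≤ lam1 then 0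
    else (1 / 2) * (σ ^ 2 / lam1 - 1 + Real.log (lam1 / σ ^ 2)) :=
  augmented_kl_gaussian_general μ₁ σ hσ μ₂ S hS lam1 lamn hmax hmin
end

section
/- Let Σ ∈ ℝ^{n×n} be symmetric positive semidefinite with eigenvalues λ₁ ≥ … ≥ λ_n, let m < n/2, and let σ₁ ≥ … ≥ σ_m ≥ 0 satisfy λ_{n−m+i} ≤ σ_i ≤ λ_i for i = 1,…,m. Then there exists V ∈ O(m,n) (i.e., VVᵀ = I_m) such that VΣVᵀ = diag(σ₁,…,σ_m). -/
open MeasureTheory ENNReal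

/-!
Write `Σ = Q Λ Qᵀ` with `Λ = diag λ`. Since `λ_{n-m+i} ≤ σ_i ≤ λ_i`, each `σ_i` is a convex
combination `sᵢ² λ_i + cᵢ² λ_{n-m+i}` with `sᵢ² + cᵢ² = 1`. Because `2m < n`, the index sets
`{1, …, m}` and `{n-m+1, …, n}` are disjoint, so the vectors `sᵢ e_i + cᵢ e_{n-m+i}` are orthonormal
and diagonalise `Λ` with the entries `σᵢ`; rotating them by `Q` gives the rows of `V`.
-/

open Matrix Function

theorem exists_sq_add_sq_eq_one_and_sq_mul_add_sq_mul_eq {a b σ : ℝ} (ha : a ≤ σ) (hb : σ ≤ b) :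
    ∃ s c : ℝ, s ^ 2 + c ^ 2 = 1 ∧ s ^ 2 * b + c ^ 2 * a = σ := by
  have hσ : σ ∈ segment ℝ a b := Icc_subset_segment ⟨ha, hb⟩
  rw [segment_eq_image] at hσ
  obtain ⟨t, ⟨ht0, ht1⟩, rfl⟩ := hσ
  refine ⟨√t, √(1 - t), ?_, ?_⟩ <;>
    simp only [Real.sq_sqrt ht0, Real.sq_sqrt (sub_nonneg.2 ht1), smul_eq_mul] <;> ring

namespace Matrix

variable {ι κ R : Type*} [Fintype κ] [DecidableEq κ]

def twoSupported [AddZeroClass R] (e g : ι → κ) (s c : ι → R) : Matrix ι κ R :=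
  of fun i j => (if j = e i then s i else 0) + if j = g i then c i else 0

theorem twoSupported_mul_diagonal_mul_transpose [CommSemiring R] [DecidableEq ι] {e g : ι → κ}
    (he : Injective e) (hg : Injective g) (heg : ∀ i k, e i ≠ g k) (s c : ι → R) (d : κ → R) :
    twoSupported e g s c * diagonal d * (twoSupported e g s c)ᵀ =
      diagonal fun i => s i ^ 2 * d (e i) + c i ^ 2 * d (g i) := by
  ext i k
  simp only [twoSupported, mul_apply, of_apply, diagonal_apply, eq_comm, mul_ite, add_mul,
    ite_mul, zero_mul, mul_zero, Finset.sum_ite_eq, Finset.mem_univ, ↓reduceIte, transpose_apply,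
    mul_add, Finset.sum_add_distrib, Finset.sum_ite_eq', he.eq_iff, heg, add_zero, hg.eq_iff,
    zero_add]
  rcases eq_or_ne i k with rfl | h
  · simp only [if_true]; ring
  · simp only [h, if_false, add_zero]

theorem mul_transpose_mul_conj_mul_transpose [CommRing R] {Q : Matrix κ κ R} (hQ : Q * Qᵀ = 1)
    (A : Matrix ι κ R) (M : Matrix κ κ R) :
    A * Qᵀ * (Q * M * Qᵀ) * (A * Qᵀ)ᵀ = A * M * Aᵀ := by
  have hQ' : Qᵀ * Q = 1 := mul_eq_one_comm.mp hQ
  simp only [transpose_mul, transpose_transpose, Matrix.mul_assoc]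
  simp only [← Matrix.mul_assoc Qᵀ Q, hQ', Matrix.one_mul]

end Matrix

theorem exists_stiefel_diagonal {m n : ℕ} (hmn : 2 * m < n)
    (lam : Fin n → ℝ)
    (Q : Matrix (Fin n) (Fin n) ℝ) (hQ : Q * Q.transpose = 1)
    (S : Matrix (Fin n) (Fin n) ℝ)
    (hS : S = Q * Matrix.diagonal lam * Q.transpose)
    (σ' : Fin m → ℝ)
    (hbound : ∀ i : Fin m,
      lam ⟨n - m + i.1, by have := i.isLt; omega⟩ ≤ σ' i ∧
      σ' i ≤ lam ⟨i.1, by have := i.isLt; omega⟩) :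
    ∃ V : Matrix (Fin m) (Fin n) ℝ, V * V.transpose = 1 ∧
      V * S * V.transpose = Matrix.diagonal σ' := by
  let e : Fin m → Fin n := Fin.castLE (by omega)
  let g : Fin m → Fin n := fun i => ⟨n - m + i.1, by omega⟩
  have he : Injective e := Fin.castLE_injective _
  have hg : Injective g := fun i k h => Fin.ext (by simpa [g, Fin.ext_iff] using h)
  have heg : ∀ i k, e i ≠ g k := fun i k h => by
    simp only [e, g, Fin.ext_iff, Fin.val_castLE] at h
    omega
  choose s c hsc hσ using fun i =>
    exists_sq_add_sq_eq_one_and_sq_mul_add_sq_mul_eq (hbound i).1 (hbound i).2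
  have key := twoSupported_mul_diagonal_mul_transpose he hg heg s c
  refine ⟨twoSupported e g s c * Q.transpose, ?_, ?_⟩
  · have h := mul_transpose_mul_conj_mul_transpose hQ (twoSupported e g s c) 1
    simp only [Matrix.mul_one, hQ] at h
    rw [h]
    simpa [hsc] using key 1
  · rw [hS, mul_transpose_mul_conj_mul_transpose hQ, key]
    exact congrArg diagonal (funext hσ)
end

section
/- Let ρ₁ be the Dirac measure at y ∈ ℝᵐ and ρ₂ the discrete measure on ℝⁿ with ρ₂(xᵢ) = pᵢ for distinct points x₁,…,x_k ∈ ℝⁿ and weights pᵢ ≥ 0 summing to 1, with m ≤ n. Then the squared augmented 2-Wasserstein distance Ŵ₂(ρ₁,ρ₂)² = inf_{V∈O(m,n), b∈ℝᵐ} Σᵢ pᵢ‖Vxᵢ + b − y‖₂² equals the sum of the m smallest eigenvalues of the weighted covariance matrix X = Σᵢ pᵢ(xᵢ − x̄)(xᵢ − x̄)ᵀ, where x̄ = Σᵢ pᵢxᵢ. -/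
open MeasureTheory ENNReal

lemma reindex_sum {n m : ℕ} (hmn : m ≤ n) (f : Fin n → ℝ) :
    (∑ i : Fin m, f ⟨n - m + i.1, by have := i.isLt; omega⟩) =
    ∑ j : Fin n, (if n - m ≤ j.1 then f j else 0) := by
  rcases Nat.eq_zero_or_pos m with hm | hm
  · subst hm
    rw [Finset.sum_eq_zero (by simp), Finset.sum_eq_zero]
    intro j _
    rw [if_neg (by have := j.isLt; omega)]
  · rw [← Finset.sum_filter]
    refine Finset.sum_nbij' (fun i => ⟨n - m + i.1, by have := i.isLt; omega⟩)
      (fun j => ⟨j.1 - (n - m), by have := j.isLt; omega⟩) ?_ ?_ ?_ ?_ ?_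
    · intro a _
      simp only [Finset.mem_filter, Finset.mem_univ, true_and]
      omega
    · intro a _; exact Finset.mem_univ _
    · intro a _; ext; simp
    · intro a ha
      simp only [Finset.mem_filter, Finset.mem_univ, true_and] at ha
      ext; simp; omega
    · intro a _; rfl

lemma kyfan {n m : ℕ} (hmn : m ≤ n) (lam : Fin n → ℝ) (hanti : Antitone lam)
    (c : Fin n → ℝ) (hc0 : ∀ j, 0 ≤ c j) (hc1 : ∀ j, c j ≤ 1)
    (hcs : ∑ j, c j = m) :
    (∑ j : Fin n, if n - m ≤ j.1 then lam j else 0) ≤ ∑ j, lam j * c j := by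
  rcases Nat.eq_zero_or_pos m with hm | hm
  · subst hm
    have h1 : ∀ j : Fin n, c j = 0 := by
      intro j
      have h2 := (Finset.sum_eq_zero_iff_of_nonneg (fun i _ => hc0 i)).mp (by simpa using hcs)
      exact h2 j (Finset.mem_univ j)
    rw [Finset.sum_eq_zero (fun j _ => by rw [if_neg (show ¬ (n - 0 ≤ j.1) by have := j.isLt; omega)]),
      Finset.sum_eq_zero (fun j _ => by rw [h1, mul_zero])]
  · set t0 := lam ⟨n - m, by omega⟩ with ht0
    set e : Fin n → ℝ := fun j => if n - m ≤ j.1 then (1:ℝ) else 0 with he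
    have hes : ∑ j, e j = (m : ℝ) := by
      rw [← reindex_sum hmn (fun _ => (1:ℝ))]
      simp
    have hterm : ∀ j : Fin n, 0 ≤ (lam j - t0) * (c j - e j) := by
      intro j
      by_cases h : n - m ≤ j.1
      · have h1 : lam j ≤ t0 := hanti (by simpa [Fin.le_def] using h)
        have h2 : c j ≤ 1 := hc1 j
        simp only [he, if_pos h]
        nlinarith
      · have h1 : t0 ≤ lam j := hanti (by simp [Fin.le_def]; omega)
        have h2 : 0 ≤ c j := hc0 j
        simp only [he, if_neg h]
        nlinarith
    have hge : 0 ≤ ∑ j, (lam j - t0) * (c j - e j) :=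
      Finset.sum_nonneg fun j _ => hterm j
    have hexp : ∑ j, (lam j - t0) * (c j - e j)
        = (∑ j, lam j * c j) - (∑ j, lam j * e j) - t0 * (∑ j, c j) + t0 * (∑ j, e j) := by
      simp only [Finset.mul_sum]
      rw [← Finset.sum_sub_distrib, ← Finset.sum_sub_distrib, ← Finset.sum_add_distrib]
      exact Finset.sum_congr rfl fun j _ => by ring
    have hle : ∑ j, lam j * e j = ∑ j : Fin n, if n - m ≤ j.1 then lam j else 0 := by
      refine Finset.sum_congr rfl fun j _ => ?_
      simp only [he, mul_ite, mul_one, mul_zero]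
    rw [hexp, hcs, hes, hle] at hge
    linarith

theorem augmented_wasserstein_dirac_discrete {m n k : ℕ} (hmn : m ≤ n)
    (y : Fin m → ℝ) (x : Fin k → Fin n → ℝ) (hx : Function.Injective x)
    (p : Fin k → ℝ) (hp : ∀ i, 0 ≤ p i) (hsum : ∑ i, p i = 1)
    (lam : Fin n → ℝ) (hanti : Antitone lam)
    (Q : Matrix (Fin n) (Fin n) ℝ) (hQ : Q * Q.transpose = 1)
    (hX : (∑ i, p i •
        Matrix.vecMulVec (x i - ∑ j, p j • x j) (x i - ∑ j, p j • x j))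
      = Q * Matrix.diagonal lam * Q.transpose) :
    sInf {r : ℝ | ∃ (V : Matrix (Fin m) (Fin n) ℝ) (b : Fin m → ℝ),
        V * V.transpose = 1 ∧
        r = ∑ i, p i * ∑ j, (V.mulVec (x i) + b - y) j ^ 2} =
    ∑ i : Fin m, lam ⟨n - m + i.1, by have := i.isLt; omega⟩ := by
  classical
  set xbar : Fin n → ℝ := fun a => ∑ j, p j * x j a with hxbar
  set u : Fin k → Fin n → ℝ := fun i a => x i a - xbar a with hu
  -- entrywise covariance
  have hXab : ∀ a b : Fin n, (∑ i, p i * (u i a * u i b)) = ∑ t, Q a t * (lam t * Q b t) := by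
    intro a b
    rw [Matrix.mul_assoc] at hX
    have h := congrFun (congrFun hX a) b
    simp only [Matrix.sum_apply, Matrix.smul_apply, Pi.sub_apply, Matrix.vecMulVec_apply,
      Finset.sum_apply, Pi.smul_apply, smul_eq_mul, Matrix.mul_apply, Matrix.diagonal_apply,
      Matrix.transpose_apply, ite_mul, zero_mul, Finset.sum_ite_eq] at h
    simpa [hu, hxbar, smul_eq_mul] using h
  have huz : ∀ a, ∑ i, p i * u i a = 0 := by
    intro a
    simp only [hu, mul_sub, Finset.sum_sub_distrib]
    rw [← Finset.sum_mul, hsum, one_mul]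
    simp [hxbar]
  -- the main identity
  have hmain : ∀ (V : Matrix (Fin m) (Fin n) ℝ) (b : Fin m → ℝ),
      (∑ i, p i * ∑ j, (V.mulVec (x i) + b - y) j ^ 2)
      = (∑ t, lam t * ∑ r, (V * Q) r t ^ 2)
        + ∑ j, (V.mulVec xbar j + b j - y j) ^ 2 := by
    intro V b
    set A : Fin k → Fin m → ℝ := fun i j => ∑ a, V j a * u i a with hA
    set c : Fin m → ℝ := fun j => V.mulVec xbar j + b j - y j with hc
    have step0 : ∀ i j, (V.mulVec (x i) + b - y) j = A i j + c j := by
      intro i j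
      simp only [Pi.add_apply, Pi.sub_apply, hA, hc, hu, Matrix.mulVec, dotProduct]
      rw [Finset.sum_congr rfl (fun a _ => mul_sub (V j a) (x i a) (xbar a)),
        Finset.sum_sub_distrib]
      ring
    have hzero : ∀ j, ∑ i, p i * A i j = 0 := by
      intro j
      have h1 : ∀ i, p i * A i j = ∑ a, V j a * (p i * u i a) := by
        intro i
        simp only [hA, Finset.mul_sum]
        exact Finset.sum_congr rfl fun a _ => by ring
      simp only [h1]
      rw [Finset.sum_comm]
      refine Finset.sum_eq_zero fun a _ => ?_
      rw [← Finset.mul_sum, huz, mul_zero]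
    have key2 : ∀ j : Fin m, (∑ i, p i * A i j ^ 2) = ∑ t, lam t * (V * Q) j t ^ 2 := by
      intro j
      have h1 : ∀ i, p i * A i j ^ 2 = ∑ a, ∑ b, V j a * V j b * (p i * (u i a * u i b)) := by
        intro i
        simp only [hA]
        rw [pow_two, Finset.sum_mul_sum, Finset.mul_sum]
        refine Finset.sum_congr rfl fun a _ => ?_
        rw [Finset.mul_sum]
        exact Finset.sum_congr rfl fun b _ => by ring
      simp only [h1]
      rw [Finset.sum_comm]
      have h2 : ∀ a, (∑ i, ∑ b, V j a * V j b * (p i * (u i a * u i b)))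
          = ∑ b, ∑ t, V j a * V j b * (Q a t * (lam t * Q b t)) := by
        intro a
        rw [Finset.sum_comm]
        refine Finset.sum_congr rfl fun b _ => ?_
        rw [← Finset.mul_sum, hXab a b, Finset.mul_sum]
      simp only [h2]
      have h3 : ∀ t, lam t * (V * Q) j t ^ 2
          = ∑ a, ∑ b, V j a * V j b * (Q a t * (lam t * Q b t)) := by
        intro t
        simp only [Matrix.mul_apply]
        rw [pow_two, Finset.sum_mul_sum, Finset.mul_sum]
        refine Finset.sum_congr rfl fun a _ => ?_
        rw [Finset.mul_sum]
        exact Finset.sum_congr rfl fun b _ => by ring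
      simp only [h3]
      calc (∑ a, ∑ b, ∑ t, V j a * V j b * (Q a t * (lam t * Q b t)))
          = ∑ a, ∑ t, ∑ b, V j a * V j b * (Q a t * (lam t * Q b t)) :=
            Finset.sum_congr rfl fun a _ => Finset.sum_comm
        _ = ∑ t, ∑ a, ∑ b, V j a * V j b * (Q a t * (lam t * Q b t)) := Finset.sum_comm
    have expand : ∀ i, (∑ j, (A i j + c j) ^ 2)
        = (∑ j, A i j ^ 2) + (2 * ∑ j, A i j * c j + ∑ j, c j ^ 2) := by
      intro i
      rw [Finset.mul_sum, ← Finset.sum_add_distrib, ← Finset.sum_add_distrib]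
      exact Finset.sum_congr rfl fun jj _ => by ring
    have hmid : (∑ i, p i * (2 * ∑ j, A i j * c j)) = 0 := by
      have h1 : ∀ i, p i * (2 * ∑ j, A i j * c j) = 2 * ∑ j, (p i * A i j) * c j := by
        intro i
        rw [Finset.mul_sum, Finset.mul_sum, Finset.mul_sum]
        exact Finset.sum_congr rfl fun j _ => by ring
      simp only [h1]
      rw [← Finset.mul_sum, Finset.sum_comm]
      rw [Finset.sum_eq_zero, mul_zero]
      intro j _
      rw [← Finset.sum_mul, hzero, zero_mul]
    calc ∑ i, p i * ∑ j, (V.mulVec (x i) + b - y) j ^ 2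
        = ∑ i, p i * ∑ j, (A i j + c j) ^ 2 := by
          refine Finset.sum_congr rfl fun i _ => ?_
          rw [Finset.sum_congr rfl fun j _ => by rw [step0 i j]]
      _ = ∑ i, (p i * ∑ j, A i j ^ 2
            + (p i * (2 * ∑ j, A i j * c j) + p i * ∑ j, c j ^ 2)) := by
          refine Finset.sum_congr rfl fun i _ => ?_
          rw [expand i]
          ring
      _ = (∑ i, p i * ∑ j, A i j ^ 2)
            + ((∑ i, p i * (2 * ∑ j, A i j * c j)) + ∑ i, p i * ∑ j, c j ^ 2) := by
          rw [Finset.sum_add_distrib, Finset.sum_add_distrib]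
      _ = (∑ t, lam t * ∑ r, (V * Q) r t ^ 2) + ∑ j, c j ^ 2 := by
          rw [hmid, zero_add, ← Finset.sum_mul, hsum, one_mul]
          congr 1
          calc ∑ i, p i * ∑ j, A i j ^ 2
              = ∑ i, ∑ j, p i * A i j ^ 2 := by
                exact Finset.sum_congr rfl fun i _ => Finset.mul_sum _ _ _
            _ = ∑ j, ∑ i, p i * A i j ^ 2 := Finset.sum_comm
            _ = ∑ j, ∑ t, lam t * (V * Q) j t ^ 2 :=
                Finset.sum_congr rfl fun j _ => key2 j
            _ = ∑ t, ∑ j, lam t * (V * Q) j t ^ 2 := Finset.sum_comm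
            _ = ∑ t, lam t * ∑ r, (V * Q) r t ^ 2 :=
                Finset.sum_congr rfl fun t _ => (Finset.mul_sum _ _ _).symm
  have target_eq : (∑ i : Fin m, lam ⟨n - m + i.1, by have := i.isLt; omega⟩)
      = ∑ j : Fin n, (if n - m ≤ j.1 then lam j else 0) := reindex_sum hmn lam
  have hlow : ∀ r ∈ {r : ℝ | ∃ (V : Matrix (Fin m) (Fin n) ℝ) (b : Fin m → ℝ),
        V * V.transpose = 1 ∧
        r = ∑ i, p i * ∑ j, (V.mulVec (x i) + b - y) j ^ 2},
      (∑ i : Fin m, lam ⟨n - m + i.1, by have := i.isLt; omega⟩) ≤ r := by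
    rintro r ⟨V, b, hV, rfl⟩
    rw [hmain V b, target_eq]
    set W := V * Q with hW
    have hW1 : W * W.transpose = 1 := by
      rw [hW, Matrix.transpose_mul, ← Matrix.mul_assoc, Matrix.mul_assoc V Q, hQ,
        Matrix.mul_one, hV]
    have hc0 : ∀ t, (0:ℝ) ≤ ∑ r, W r t ^ 2 := fun t => Finset.sum_nonneg fun r _ => sq_nonneg _
    have hcsum : ∑ t, ∑ r, W r t ^ 2 = (m : ℝ) := by
      have h1 := Matrix.trace_mul_comm W.transpose W
      rw [hW1, Matrix.trace_one] at h1
      have h2 : (W.transpose * W).trace = ∑ t, ∑ r, W r t ^ 2 := by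
        simp [Matrix.trace, Matrix.diag, Matrix.mul_apply, pow_two]
      rw [h2] at h1
      simpa using h1
    have hc1 : ∀ t, (∑ r, W r t ^ 2) ≤ 1 := by
      intro t
      have hP : W.transpose * W * (W.transpose * W) = W.transpose * W := by
        rw [Matrix.mul_assoc, ← Matrix.mul_assoc W, hW1, Matrix.one_mul]
      have h1 := congrFun (congrFun hP t) t
      simp only [Matrix.mul_apply, Matrix.transpose_apply] at h1
      have h2 : ∀ s, (∑ r, W r t * W r s) * (∑ r, W r s * W r t) = (∑ r, W r t * W r s) ^ 2 := by
        intro s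
        rw [pow_two]
        congr 1
        exact Finset.sum_congr rfl fun r _ => mul_comm _ _
      rw [Finset.sum_congr rfl fun s _ => h2 s] at h1
      have h3 : ((∑ r, W r t * W r t)) ^ 2 ≤ ∑ s, (∑ r, W r t * W r s) ^ 2 :=
        Finset.single_le_sum (f := fun s => (∑ r, W r t * W r s) ^ 2)
          (fun s _ => sq_nonneg _) (Finset.mem_univ t)
      rw [h1] at h3
      have h4 : (∑ r, W r t * W r t) = ∑ r, W r t ^ 2 :=
        Finset.sum_congr rfl fun r _ => (pow_two _).symm
      rw [h4] at h3
      nlinarith [hc0 t]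
    have hk := kyfan hmn lam hanti (fun t => ∑ r, W r t ^ 2) hc0 hc1 hcsum
    have h5 : 0 ≤ ∑ j, (V.mulVec xbar j + b j - y j) ^ 2 :=
      Finset.sum_nonneg fun j _ => sq_nonneg _
    linarith
  have hQ' : Q.transpose * Q = 1 := mul_eq_one_comm.mp hQ
  set W0 : Matrix (Fin m) (Fin n) ℝ :=
    Matrix.of (fun i j => if j = (⟨n - m + i.1, by have := i.isLt; omega⟩ : Fin n)
      then (1:ℝ) else 0) with hW0def
  set V0 := W0 * Q.transpose with hV0def
  have hW0W0 : W0 * W0.transpose = 1 := by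
    ext i i'
    simp only [hW0def, Matrix.mul_apply, Matrix.transpose_apply, Matrix.of_apply, ite_mul,
      one_mul, zero_mul]
    rw [Finset.sum_ite_eq' Finset.univ]
    simp only [Finset.mem_univ, if_true]
    by_cases h : i = i'
    · subst h; simp [Matrix.one_apply]
    · rw [if_neg, Matrix.one_apply_ne h]
      intro hh
      simp only [Fin.mk.injEq] at hh
      exact h (Fin.ext (by omega))
  have hV0 : V0 * V0.transpose = 1 := by
    rw [hV0def, Matrix.transpose_mul, Matrix.transpose_transpose, ← Matrix.mul_assoc,
      Matrix.mul_assoc W0, hQ', Matrix.mul_one, hW0W0]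
  have hV0Q : V0 * Q = W0 := by
    rw [hV0def, Matrix.mul_assoc, hQ', Matrix.mul_one]
  set b0 : Fin m → ℝ := fun j => y j - V0.mulVec xbar j with hb0
  have hmem : (∑ i : Fin m, lam ⟨n - m + i.1, by have := i.isLt; omega⟩) ∈
      {r : ℝ | ∃ (V : Matrix (Fin m) (Fin n) ℝ) (b : Fin m → ℝ),
        V * V.transpose = 1 ∧
        r = ∑ i, p i * ∑ j, (V.mulVec (x i) + b - y) j ^ 2} := by
    refine ⟨V0, b0, hV0, ?_⟩
    rw [hmain V0 b0, hV0Q]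
    have hz : ∑ j, (V0.mulVec xbar j + b0 j - y j) ^ 2 = 0 := by
      refine Finset.sum_eq_zero fun j _ => ?_
      simp [hb0]
    rw [hz, add_zero]
    have h1 : ∀ t : Fin n, lam t * ∑ r : Fin m, W0 r t ^ 2
        = ∑ r : Fin m, (if t = (⟨n - m + r.1, by have := r.isLt; omega⟩ : Fin n)
          then lam t else 0) := by
      intro t
      rw [Finset.mul_sum]
      refine Finset.sum_congr rfl fun r _ => ?_
      simp only [hW0def, Matrix.of_apply]
      split_ifs <;> simp
    calc (∑ i : Fin m, lam ⟨n - m + i.1, by have := i.isLt; omega⟩)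
        = ∑ r : Fin m, ∑ t : Fin n, (if t = (⟨n - m + r.1, by have := r.isLt; omega⟩ : Fin n)
            then lam t else 0) := by
          refine Finset.sum_congr rfl fun r _ => ?_
          rw [Finset.sum_ite_eq' Finset.univ]
          simp
      _ = ∑ t : Fin n, ∑ r : Fin m, (if t = (⟨n - m + r.1, by have := r.isLt; omega⟩ : Fin n)
            then lam t else 0) := Finset.sum_comm
      _ = ∑ t : Fin n, lam t * ∑ r : Fin m, W0 r t ^ 2 :=
            Finset.sum_congr rfl fun t _ => (h1 t).symm
  exact le_antisymm (csInf_le ⟨_, hlow⟩ hmem) (le_csInf ⟨_, hmem⟩ hlow)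
end
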